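/- arXiv:2510.11315 — 3 statements merged into one kernel-verified Lean document; each statement's English description precedes it below -/
import Mathlib

section
/- For all a > 0 and b > 0, the integral ∫₀^∞ exp(-a/η² - b·η²) dη equals (1/2)·√(π/b)·exp(-2√(a·b)). -/
/-!
Completing the square, `-a / η ^ 2 - b * η ^ 2 = -2 √(ab) - (√b η - √a / η) ^ 2`, so it suffices
to integrate `f (s x - t / x)` over `x > 0` for the even function `f y = exp (-y ^ 2)`
(Cauchy–Schlömilch). After scaling to `s = 1`, the map `x ↦ x - t / x` is an increasing
bijection of `(0, ∞)` onto `ℝ` with derivative `1 + t / x ^ 2`; under the inversion `x ↦ t / x`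
the `t / x ^ 2` part of `∫ f = ∫ (1 + t / x ^ 2) f (x - t / x)` becomes `∫ f (t / x - x)`, so
for even `f` the half-line integral is `½ ∫ f`, and `∫ exp (-y ^ 2) = √π`.
-/

open Real MeasureTheory Set

variable {E : Type*} [NormedAddCommGroup E] [NormedSpace ℝ E]

lemma hasDerivAt_const_div (c : ℝ) {x : ℝ} (hx : x ≠ 0) :
    HasDerivAt (fun y => c / y) (-(c / x ^ 2)) x := by
  simpa [div_eq_mul_inv] using (hasDerivAt_inv hx).const_mul c

section
variable {t : ℝ}

lemma image_const_div_Ioi (ht : 0 < t) : (fun x => t / x) '' Ioi 0 = Ioi 0 :=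
  Subset.antisymm (image_subset_iff.2 fun _ hx => div_pos ht hx)
    fun y hy => ⟨t / y, div_pos ht hy, div_div_cancel₀ ht.ne'⟩

lemma injOn_const_div_Ioi (ht : 0 < t) : InjOn (fun x => t / x) (Ioi 0) :=
  fun x _ y _ h => by simpa [div_div_cancel₀ ht.ne'] using congrArg (t / ·) h

lemma integral_Ioi_comp_const_div (ht : 0 < t) (g : ℝ → E) :
    ∫ x in Ioi 0, (t / x ^ 2) • g (t / x) = ∫ x in Ioi 0, g x := by
  conv_rhs => rw [← image_const_div_Ioi ht]
  rw [integral_image_eq_integral_abs_deriv_smul measurableSet_Ioi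
    (fun x hx => (hasDerivAt_const_div t (ne_of_gt hx)).hasDerivWithinAt)
    (injOn_const_div_Ioi ht)]
  refine setIntegral_congr_fun measurableSet_Ioi fun x hx => ?_
  rw [abs_neg, abs_of_pos (div_pos ht (pow_pos hx 2))]

lemma one_le_one_add_div_sq (ht : 0 ≤ t) (x : ℝ) : 1 ≤ 1 + t / x ^ 2 :=
  le_add_of_nonneg_right (by positivity)

lemma one_add_div_sq_pos (ht : 0 ≤ t) (x : ℝ) : 0 < 1 + t / x ^ 2 :=
  one_pos.trans_le (one_le_one_add_div_sq ht x)

lemma hasDerivAt_sub_const_div {x : ℝ} (hx : x ≠ 0) :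
    HasDerivAt (fun x => x - t / x) (1 + t / x ^ 2) x := by
  simpa using (hasDerivAt_id' x).fun_sub (hasDerivAt_const_div t hx)

lemma strictMonoOn_sub_const_div (ht : 0 < t) : StrictMonoOn (fun x => x - t / x) (Ioi 0) :=
  fun _ hx _ _ hxy => sub_lt_sub hxy (div_lt_div_of_pos_left ht hx hxy)

lemma image_sub_const_div_Ioi (ht : 0 < t) : (fun x => x - t / x) '' Ioi 0 = univ := by
  refine eq_univ_of_forall fun y => ?_
  -- the positive root of `x ^ 2 - y * x - t`
  set r := √(y ^ 2 + 4 * t)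
  have hr : r ^ 2 = y ^ 2 + 4 * t := sq_sqrt (by positivity)
  have hyr : |y| < r := abs_lt_of_sq_lt_sq (by linarith) (sqrt_nonneg _)
  have hx : 0 < (y + r) / 2 := by linarith [neg_abs_le y]
  refine ⟨(y + r) / 2, hx, ?_⟩
  have hyr' : y + r ≠ 0 := by linarith
  field_simp
  linear_combination hr

lemma integral_Ioi_smul_comp_sub_const_div (ht : 0 < t) (f : ℝ → E) :
    ∫ x in Ioi 0, (1 + t / x ^ 2) • f (x - t / x) = ∫ y, f y := by
  conv_rhs => rw [← setIntegral_univ, ← image_sub_const_div_Ioi ht]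
  rw [integral_image_eq_integral_abs_deriv_smul measurableSet_Ioi
      (fun x hx => (hasDerivAt_sub_const_div (ne_of_gt hx)).hasDerivWithinAt)
      (strictMonoOn_sub_const_div ht).injOn]
  refine setIntegral_congr_fun measurableSet_Ioi fun x _ => ?_
  rw [abs_of_pos (one_add_div_sq_pos ht.le x)]

lemma integrableOn_Ioi_smul_comp_sub_const_div (ht : 0 < t) {f : ℝ → E} (hf : Integrable f) :
    IntegrableOn (fun x => (1 + t / x ^ 2) • f (x - t / x)) (Ioi 0) := by
  have h := (integrableOn_image_iff_integrableOn_abs_deriv_smul measurableSet_Ioi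
      (fun x hx => (hasDerivAt_sub_const_div (ne_of_gt hx)).hasDerivWithinAt)
      (strictMonoOn_sub_const_div ht).injOn f).1
  rw [image_sub_const_div_Ioi ht] at h
  refine (h hf.integrableOn).congr_fun (fun x _ => ?_) measurableSet_Ioi
  dsimp only
  rw [abs_of_pos (one_add_div_sq_pos ht.le x)]

lemma integrableOn_Ioi_comp_sub_const_div (ht : 0 < t) {f : ℝ → E} (hf : Integrable f) :
    IntegrableOn (fun x => f (x - t / x)) (Ioi 0) := by
  refine IntegrableOn.congr_fun ((integrableOn_Ioi_smul_comp_sub_const_div ht hf).bdd_smul 1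
    (φ := fun x => (1 + t / x ^ 2)⁻¹) (by fun_prop : Measurable _).aestronglyMeasurable
    (.of_forall fun x => ?_)) (fun x _ => ?_) measurableSet_Ioi
  · rw [norm_inv, Real.norm_of_nonneg (one_add_div_sq_pos ht.le x).le]
    exact inv_le_one_of_one_le₀ (one_le_one_add_div_sq ht.le x)
  · simp [smul_smul, inv_mul_cancel₀ (one_add_div_sq_pos ht.le x).ne']

theorem integral_eq_integral_Ioi_comp_sub_const_div_add (ht : 0 < t) {f : ℝ → E}
    (hf : Integrable f) :
    ∫ y, f y = (∫ x in Ioi 0, f (x - t / x)) + ∫ x in Ioi 0, f (t / x - x) := by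
  have hF := integrableOn_Ioi_smul_comp_sub_const_div ht hf
  have hG := integrableOn_Ioi_comp_sub_const_div ht hf
  have hinv := integral_Ioi_comp_const_div ht fun x => f (t / x - x)
  simp only [div_div_cancel₀ ht.ne'] at hinv
  have hH : IntegrableOn (fun x => (t / x ^ 2) • f (x - t / x)) (Ioi 0) :=
    (hF.sub hG).congr_fun (fun x _ => by simp [add_smul]) measurableSet_Ioi
  rw [← integral_Ioi_smul_comp_sub_const_div ht, ← hinv]
  simp only [add_smul, one_smul]
  exact integral_add hG hH

theorem integral_Ioi_comp_sub_const_div_of_even (ht : 0 < t) {f : ℝ → E} (hf : Integrable f)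
    (heven : ∀ y, f (-y) = f y) :
    ∫ x in Ioi 0, f (x - t / x) = (2 : ℝ)⁻¹ • ∫ y, f y := by
  have hflip : ∀ x, f (t / x - x) = f (x - t / x) := fun x => by rw [← heven, neg_sub]
  rw [integral_eq_integral_Ioi_comp_sub_const_div_add ht hf]
  simp only [hflip, ← two_smul ℝ, smul_smul]
  norm_num

end

theorem integral_Ioi_comp_mul_sub_const_div_of_even {s t : ℝ} (hs : 0 < s) (ht : 0 < t)
    {f : ℝ → E} (hf : Integrable f) (heven : ∀ y, f (-y) = f y) :
    ∫ x in Ioi 0, f (s * x - t / x) = (2 * s)⁻¹ • ∫ y, f y := by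
  have hscale : ∀ x, s * x - t / x = s * x - s * t / (s * x) := fun x => by
    rw [mul_div_mul_left _ _ hs.ne']
  simp only [hscale]
  rw [integral_comp_mul_left_Ioi (fun y => f (y - s * t / y)) 0 hs, mul_zero,
    integral_Ioi_comp_sub_const_div_of_even (mul_pos hs ht) hf heven, smul_smul, mul_inv_rev]

theorem gaussian_type_integral (a b : ℝ) (ha : 0 < a) (hb : 0 < b) :
    ∫ η in Set.Ioi (0:ℝ), Real.exp (-a / η ^ 2 - b * η ^ 2)
      = (1 / 2) * Real.sqrt (π / b) * Real.exp (-2 * Real.sqrt (a * b)) := by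
  have hsquare : ∀ η ∈ Ioi (0 : ℝ), exp (-a / η ^ 2 - b * η ^ 2)
      = exp (-2 * √(a * b)) * exp (-(√b * η - √a / η) ^ 2) := fun η hη => by
    have hη : η ≠ 0 := ne_of_gt hη
    rw [← exp_add, sqrt_mul ha.le]
    congr 1
    field_simp
    linear_combination (η ^ 4) * sq_sqrt hb.le + sq_sqrt ha.le
  have hgauss : ∫ y, exp (-y ^ 2) = √π := by simpa using integral_gaussian 1
  rw [setIntegral_congr_fun measurableSet_Ioi hsquare, integral_const_mul,
    integral_Ioi_comp_mul_sub_const_div_of_even (f := fun y => exp (-y ^ 2)) (sqrt_pos.2 hb)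
      (sqrt_pos.2 ha) (by simpa using integrable_exp_neg_mul_sq one_pos) fun y => by rw [neg_sq],
    hgauss, sqrt_div pi_pos.le, smul_eq_mul]
  ring
end

section
/- Let ω ∈ ℝ and ψ > 0. Then for every x ∈ ℝ, ∫₀^∞ (1/(η√(2π)))·exp(-(x-ω)²/(2η²)) · (η/ψ²)·exp(-η²/(2ψ²)) dη = (1/(2ψ))·exp(-|x-ω|/ψ). -/
open Real MeasureTheory Set

/-! The Gaussian and Rayleigh exponents combine to `-|x - ω|/ψ - (η/ψ - |x - ω|/η)²/2`, so the
mixture is `exp (-|x - ω|/ψ)` times a Cauchy–Schlömilch integral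
`∫₀^∞ g (a t - b/t) dt = (∫ g) / (2a)` of the even function `g u = exp (-u²/2)`.
For `b > 0` the substitution `u = a t - b/t` is a bijection `(0, ∞) → ℝ` with `du = (a + b/t²) dt`,
and the inversion `t ↦ b/(a t)` shows that the `b/t²` part of the Jacobian contributes as much as
the `a` part. -/

theorem integral_comp_const_div_Ioi {E : Type*} [NormedAddCommGroup E] [NormedSpace ℝ E]
    (f : ℝ → E) {k : ℝ} (hk : 0 < k) :
    ∫ s in Ioi 0, (k / s ^ 2) • f (k / s) = ∫ t in Ioi 0, f t := by
  have hderiv : ∀ s ∈ Ioi (0 : ℝ),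
      HasDerivWithinAt (fun s => k / s) (-(k / s ^ 2)) (Ioi 0) s := fun s hs => by
    simpa [div_eq_mul_inv] using ((hasDerivAt_inv (ne_of_gt hs)).const_mul k).hasDerivWithinAt
  have hinj : InjOn (fun s : ℝ => k / s) (Ioi 0) := fun s _ t _ hst =>
    inv_injective (mul_left_cancel₀ hk.ne' (by simpa [div_eq_mul_inv] using hst))
  have himage : (fun s => k / s) '' Ioi 0 = Ioi 0 := by
    refine Subset.antisymm (image_subset_iff.2 fun s hs => div_pos hk hs) fun t ht => ?_
    exact ⟨k / t, div_pos hk ht, div_div_cancel₀ hk.ne'⟩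
  have hsubst := integral_image_eq_integral_abs_deriv_smul measurableSet_Ioi hderiv hinj f
  rw [himage] at hsubst
  rw [hsubst]
  refine setIntegral_congr_fun measurableSet_Ioi fun s hs => ?_
  rw [abs_neg, abs_of_pos (div_pos hk (pow_pos hs 2))]

section CauchySchlomilch

variable {a b : ℝ}

theorem hasDerivAt_mul_sub_div {t : ℝ} (ht : t ≠ 0) :
    HasDerivAt (fun t => a * t - b / t) (a + b / t ^ 2) t := by
  have h := ((hasDerivAt_id' t).const_mul a).sub ((hasDerivAt_inv ht).const_mul b)
  rwa [show a * 1 - b * -(t ^ 2)⁻¹ = a + b / t ^ 2 by ring] at h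

theorem strictMonoOn_mul_sub_div (ha : 0 < a) (hb : 0 ≤ b) :
    StrictMonoOn (fun t => a * t - b / t) (Ioi 0) := fun s hs t _ hst => by
  have h₁ : b / t ≤ b / s := div_le_div_of_nonneg_left hb hs hst.le
  have h₂ : a * s < a * t := mul_lt_mul_of_pos_left hst ha
  dsimp only
  linarith

theorem image_mul_sub_div_Ioi (ha : 0 < a) (hb : 0 < b) :
    (fun t => a * t - b / t) '' Ioi 0 = univ := by
  refine eq_univ_of_forall fun y => ?_
  -- the positive root of `a t² - y t - b`
  set r := √(y ^ 2 + 4 * a * b)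
  have hr : r ^ 2 = y ^ 2 + 4 * a * b := sq_sqrt (by positivity)
  have hyr : |y| < r := by
    rw [← sqrt_sq_eq_abs]
    exact sqrt_lt_sqrt (sq_nonneg y) (by linarith [mul_pos ha hb])
  have hpos : 0 < y + r := by linarith [neg_abs_le y]
  refine ⟨(y + r) / (2 * a), div_pos hpos (by positivity), ?_⟩
  field_simp
  linear_combination hr

theorem integral_div_sq_mul_comp_mul_sub_div (ha : 0 < a) (hb : 0 < b) {g : ℝ → ℝ}
    (hg : g.Even) :
    ∫ t in Ioi 0, b / t ^ 2 * g (a * t - b / t) = a * ∫ t in Ioi 0, g (a * t - b / t) := by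
  rw [← integral_comp_const_div_Ioi (fun t => b / t ^ 2 * g (a * t - b / t)) (div_pos hb ha),
    ← integral_const_mul]
  refine setIntegral_congr_fun measurableSet_Ioi fun s hs => ?_
  have hs : 0 < s := hs
  have hflip : a * (b / a / s) - b / (b / a / s) = -(a * s - b / s) := by
    field_simp
    ring
  rw [smul_eq_mul, hflip, hg]
  field_simp

theorem integral_comp_mul_sub_div_Ioi_of_pos (ha : 0 < a) (hb : 0 < b) {g : ℝ → ℝ}
    (hg_int : Integrable g) (hg : g.Even) :
    ∫ t in Ioi 0, g (a * t - b / t) = (∫ u, g u) / (2 * a) := by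
  have hderiv : ∀ t ∈ Ioi (0 : ℝ),
      HasDerivWithinAt (fun t => a * t - b / t) (a + b / t ^ 2) (Ioi 0) t := fun t ht =>
    (hasDerivAt_mul_sub_div (ne_of_gt ht)).hasDerivWithinAt
  have hinj := (strictMonoOn_mul_sub_div ha hb.le).injOn
  have hjac : ∀ t ∈ Ioi (0 : ℝ), |a + b / t ^ 2| • g (a * t - b / t)
      = a * g (a * t - b / t) + b / t ^ 2 * g (a * t - b / t) := fun t ht => by
    rw [abs_of_pos (by have : (0 : ℝ) < t := ht; positivity), smul_eq_mul, add_mul]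
  have hJ_int : IntegrableOn (fun t => |a + b / t ^ 2| • g (a * t - b / t)) (Ioi 0) := by
    rw [← integrableOn_image_iff_integrableOn_abs_deriv_smul measurableSet_Ioi hderiv hinj,
      image_mul_sub_div_Ioi ha hb]
    exact hg_int.integrableOn
  have hI_int : IntegrableOn (fun t => g (a * t - b / t)) (Ioi 0) := by
    have hbound : ∀ᵐ t ∂volume.restrict (Ioi 0), ‖(a + b / t ^ 2)⁻¹‖ ≤ a⁻¹ := by
      filter_upwards [ae_restrict_mem measurableSet_Ioi] with t ht
      rw [norm_inv, norm_of_nonneg (by positivity)]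
      exact inv_anti₀ ha (le_add_of_nonneg_right (by positivity))
    have hmeas : Measurable fun t : ℝ => (a + b / t ^ 2)⁻¹ := by fun_prop
    refine IntegrableOn.congr_fun (hJ_int.bdd_mul hmeas.aestronglyMeasurable hbound)
      (fun t ht => ?_) measurableSet_Ioi
    have ht : (0 : ℝ) < t := ht
    rw [abs_of_pos (by positivity), smul_eq_mul, inv_mul_cancel_left₀ (by positivity)]
  have hsplit : ∫ u, g u = a * (∫ t in Ioi 0, g (a * t - b / t))
      + ∫ t in Ioi 0, b / t ^ 2 * g (a * t - b / t) := by
    have hK_int : IntegrableOn (fun t => b / t ^ 2 * g (a * t - b / t)) (Ioi 0) := by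
      refine (hJ_int.sub (hI_int.const_mul a)).congr_fun (fun t ht => ?_) measurableSet_Ioi
      simp only [Pi.sub_apply, hjac t ht, add_sub_cancel_left]
    rw [← setIntegral_univ, ← image_mul_sub_div_Ioi ha hb,
      integral_image_eq_integral_abs_deriv_smul measurableSet_Ioi hderiv hinj,
      setIntegral_congr_fun measurableSet_Ioi hjac, integral_add (hI_int.const_mul a) hK_int,
      integral_const_mul]
  rw [hsplit, integral_div_sq_mul_comp_mul_sub_div ha hb hg, eq_div_iff (by positivity)]
  ring

theorem integral_comp_mul_sub_div_Ioi (ha : 0 < a) (hb : 0 ≤ b) {g : ℝ → ℝ}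
    (hg_int : Integrable g) (hg : g.Even) :
    ∫ t in Ioi 0, g (a * t - b / t) = (∫ u, g u) / (2 * a) := by
  rcases hb.eq_or_lt with rfl | hb
  · have hg_abs : ∫ u, g u = 2 * ∫ u in Ioi 0, g u := by
      rw [← integral_comp_abs]
      congr with u
      rcases abs_choice u with h | h <;> simp only [h, hg u]
    simp only [zero_div, sub_zero]
    rw [integral_comp_mul_left_Ioi g 0 ha, mul_zero, hg_abs, smul_eq_mul]
    field_simp
  · exact integral_comp_mul_sub_div_Ioi_of_pos ha hb hg_int hg

end CauchySchlomilch

theorem gaussian_rayleigh_mixture (ω ψ : ℝ) (hψ : 0 < ψ) (x : ℝ) :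
    ∫ η in Set.Ioi (0:ℝ),
        (1 / (η * Real.sqrt (2 * π))) * Real.exp (-(x - ω) ^ 2 / (2 * η ^ 2))
          * ((η / ψ ^ 2) * Real.exp (-η ^ 2 / (2 * ψ ^ 2)))
      = (1 / (2 * ψ)) * Real.exp (-|x - ω| / ψ) := by
  have hpoint : ∀ η ∈ Ioi (0 : ℝ),
      (1 / (η * √(2 * π))) * exp (-(x - ω) ^ 2 / (2 * η ^ 2))
          * ((η / ψ ^ 2) * exp (-η ^ 2 / (2 * ψ ^ 2)))
        = (1 / (√(2 * π) * ψ ^ 2) * exp (-|x - ω| / ψ))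
          * exp (-(1 / 2) * (ψ⁻¹ * η - |x - ω| / η) ^ 2) := fun η hη => by
    have hη : (0 : ℝ) < η := hη
    have hexponent : -(x - ω) ^ 2 / (2 * η ^ 2) + -η ^ 2 / (2 * ψ ^ 2)
        = -|x - ω| / ψ + -(1 / 2) * (ψ⁻¹ * η - |x - ω| / η) ^ 2 := by
      rw [← sq_abs (x - ω)]
      field_simp
      ring
    calc _ = 1 / (√(2 * π) * ψ ^ 2)
            * exp (-(x - ω) ^ 2 / (2 * η ^ 2) + -η ^ 2 / (2 * ψ ^ 2)) := by
          rw [exp_add]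
          field_simp
      _ = _ := by rw [hexponent, exp_add, mul_assoc]
  rw [setIntegral_congr_fun measurableSet_Ioi hpoint, integral_const_mul,
    integral_comp_mul_sub_div_Ioi (g := fun u => exp (-(1 / 2) * u ^ 2)) (inv_pos.2 hψ)
      (abs_nonneg _) (integrable_exp_neg_mul_sq one_half_pos) (fun u => by simp),
    integral_gaussian, div_div_eq_mul_div, div_one, mul_comm π]
  field_simp
end

section
/- Let ω ∈ ℝ, ψ > 0. The median of the Arctan mixture distribution, i.e., the unique x with G(x) = 1/2, equals ω + ψ·ln(2·tan(π/8)). Since 2·tan(π/8) = 2(√2 - 1) < 1, the median is strictly less than ω. -/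
open Real

/-- The Arctan–Gaussian–Rayleigh mixture CDF. -/
noncomputable def arctanCDF (ω ψ x : ℝ) : ℝ :=
  if ω ≤ x then (4 / π) * Real.arctan (1 - (1 / 2) * Real.exp (-(x - ω) / ψ))
  else (4 / π) * Real.arctan ((1 / 2) * Real.exp (-(ω - x) / ψ))

/-! On `x < ω` the equation `G x = 1/2` reads `arctan (exp ((x - ω) / ψ) / 2) = π / 8`, which is
solved by taking `tan` and then `log`. On `ω ≤ x` the argument of `arctan` is at least `1/2`,
which exceeds `tan (π / 8) = √2 - 1`, so there `G > 1/2`. -/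

theorem tan_pi_div_eight_pos : 0 < tan (π / 8) :=
  tan_pos_of_pos_of_lt_pi_div_two (by positivity) (by linarith [pi_pos])

theorem tan_pi_div_eight : tan (π / 8) = √2 - 1 := by
  set t := tan (π / 8)
  -- `tan (π / 4) = 1` by the double-angle formula; `t` is then the positive root of `t² + 2t = 1`.
  have hdouble : 2 * t / (1 - t ^ 2) = 1 := by
    have h := tan_eq_one_sub_tan_half_sq_div_one_add_tan_half_sq (π / 4)
    rwa [tan_pi_div_four, show π / 4 / 2 = π / 8 by ring, eq_comm] at h
  have hden : 1 - t ^ 2 ≠ 0 := by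
    intro h0
    simp [h0] at hdouble
  have hsq : (t + 1) ^ 2 = 2 := by
    field_simp at hdouble
    linarith
  have hsqrt : √2 = t + 1 := by rw [← hsq, sqrt_sq (by linarith [tan_pi_div_eight_pos])]
  linarith

theorem tan_pi_div_eight_lt_half : tan (π / 8) < 1 / 2 := by
  have h : √2 < 3 / 2 := (sqrt_lt' (by norm_num)).2 (by norm_num)
  rw [tan_pi_div_eight]
  linarith

theorem log_two_mul_tan_pi_div_eight_neg : log (2 * tan (π / 8)) < 0 :=
  log_neg (by linarith [tan_pi_div_eight_pos]) (by linarith [tan_pi_div_eight_lt_half])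

theorem add_mul_log_two_mul_tan_pi_div_eight_lt {ψ : ℝ} (ω : ℝ) (hψ : 0 < ψ) :
    ω + ψ * log (2 * tan (π / 8)) < ω :=
  add_lt_of_neg_right ω (mul_neg_of_pos_of_neg hψ log_two_mul_tan_pi_div_eight_neg)

theorem four_div_pi_mul_arctan_tan_pi_div_eight : 4 / π * arctan (tan (π / 8)) = 1 / 2 := by
  rw [arctan_tan (by linarith [pi_pos]) (by linarith [pi_pos])]
  field_simp
  norm_num

theorem four_div_pi_mul_arctan_eq_half_iff {y : ℝ} :
    4 / π * arctan y = 1 / 2 ↔ y = tan (π / 8) := by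
  rw [← four_div_pi_mul_arctan_tan_pi_div_eight, mul_right_inj' (by positivity), arctan_inj]

theorem half_lt_four_div_pi_mul_arctan_iff {y : ℝ} :
    1 / 2 < 4 / π * arctan y ↔ tan (π / 8) < y := by
  rw [← four_div_pi_mul_arctan_tan_pi_div_eight, mul_lt_mul_iff_right₀ (by positivity),
    arctan_lt_arctan_iff]

theorem half_lt_arctanCDF_of_le {ω ψ x : ℝ} (hψ : 0 ≤ ψ) (hx : ω ≤ x) :
    1 / 2 < arctanCDF ω ψ x := by
  have hexp : exp (-(x - ω) / ψ) ≤ 1 :=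
    exp_le_one_iff.2 (div_nonpos_of_nonpos_of_nonneg (by linarith) hψ)
  rw [arctanCDF, if_pos hx, half_lt_four_div_pi_mul_arctan_iff]
  linarith [tan_pi_div_eight_lt_half]

theorem arctanCDF_eq_half_iff_of_lt {ω ψ x : ℝ} (hψ : 0 < ψ) (hx : x < ω) :
    arctanCDF ω ψ x = 1 / 2 ↔ x = ω + ψ * log (2 * tan (π / 8)) := by
  have h2t : 0 < 2 * tan (π / 8) := by linarith [tan_pi_div_eight_pos]
  rw [arctanCDF, if_neg hx.not_ge, four_div_pi_mul_arctan_eq_half_iff, neg_sub]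
  calc 1 / 2 * exp ((x - ω) / ψ) = tan (π / 8) ↔ exp ((x - ω) / ψ) = 2 * tan (π / 8) := by
        constructor <;> intro h <;> linarith
    _ ↔ (x - ω) / ψ = log (2 * tan (π / 8)) := exp_injective.eq_iff' (exp_log h2t)
    _ ↔ x = ω + ψ * log (2 * tan (π / 8)) := by
        rw [div_eq_iff hψ.ne']
        constructor <;> intro h <;> linarith

theorem arctanCDF_eq_half_iff {ω ψ x : ℝ} (hψ : 0 < ψ) :
    arctanCDF ω ψ x = 1 / 2 ↔ x = ω + ψ * log (2 * tan (π / 8)) := by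
  have hmedian := add_mul_log_two_mul_tan_pi_div_eight_lt ω hψ
  rcases lt_or_ge x ω with hx | hx
  · exact arctanCDF_eq_half_iff_of_lt hψ hx
  · exact iff_of_false (half_lt_arctanCDF_of_le hψ.le hx).ne' (by intro h; linarith)

theorem arctanCDF_median (ω ψ : ℝ) (hψ : 0 < ψ) :
    arctanCDF ω ψ (ω + ψ * Real.log (2 * Real.tan (π / 8))) = 1 / 2 ∧
    (∀ x, arctanCDF ω ψ x = 1 / 2 → x = ω + ψ * Real.log (2 * Real.tan (π / 8))) ∧
    2 * Real.tan (π / 8) = 2 * (Real.sqrt 2 - 1) ∧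
    ω + ψ * Real.log (2 * Real.tan (π / 8)) < ω :=
  ⟨(arctanCDF_eq_half_iff hψ).2 rfl, fun _ => (arctanCDF_eq_half_iff hψ).1,
    by rw [tan_pi_div_eight], add_mul_log_two_mul_tan_pi_div_eight_lt ω hψ⟩
end
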